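/- arXiv:2503.15421 — 3 statements merged into one kernel-verified Lean document; each statement's English description precedes it below -/
import Mathlib

section
/- Let f : (ℝᵈ)ⁿ → ℝᵈ be continuously differentiable and let x = (x₁, …, xₙ) ∈ (ℝᵈ)ⁿ. Then the rank of the Fréchet derivative D(σf)(x) of the shift (σf) at x equals d·(n−1) + rank(∂f/∂x₁(x)), where ∂f/∂x₁(x) is the derivative at x₁ of the map x ↦ f(x, x₂, …, xₙ) with x₂, …, xₙ fixed. -/
/-!
The derivative of `σf` at `x` is the shift `σ(Df(x))` of the linear map `Df(x)`. A vector `v`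
lies in its kernel iff `v₂ = ⋯ = vₙ = 0` and `Df(x) v = 0`, i.e. iff `v = (w, 0, …, 0)` with
`w ∈ ker ∂f/∂x₁(x)`. So the two kernels have the same dimension, and rank–nullity on
`(ℝᵈ)ⁿ` and on `ℝᵈ` gives the formula.
-/

/-- The shift of `f : Xⁿ⁺¹ → X`: `(σf)(x₁, …, xₙ₊₁) = (x₂, …, xₙ₊₁, f(x₁, …, xₙ₊₁))`. -/
def shift {X : Type*} {n : ℕ} (f : (Fin (n + 1) → X) → X) (x : Fin (n + 1) → X) :
    Fin (n + 1) → X :=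
  Fin.snoc (fun i : Fin n => x i.succ) (f x)

open Function Module

@[simp]
theorem shift_last {X : Type*} {n : ℕ} (f : (Fin (n + 1) → X) → X) (x : Fin (n + 1) → X) :
    shift f x (Fin.last n) = f x :=
  Fin.snoc_last _ _

@[simp]
theorem shift_castSucc {X : Type*} {n : ℕ} (f : (Fin (n + 1) → X) → X) (x : Fin (n + 1) → X)
    (i : Fin n) : shift f x i.castSucc = x i.succ :=
  Fin.snoc_castSucc _ _ _

namespace LinearMap

section Semiring

variable {R M : Type*} [Semiring R] [AddCommMonoid M] [Module R M] {n : ℕ}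

def shift (F : (Fin (n + 1) → M) →ₗ[R] M) : (Fin (n + 1) → M) →ₗ[R] Fin (n + 1) → M where
  toFun := _root_.shift F
  map_add' v w := by
    ext i : 1
    cases i using Fin.lastCases <;> simp [_root_.shift]
  map_smul' c v := by
    ext i : 1
    cases i using Fin.lastCases <;> simp [_root_.shift]

@[simp]
theorem coe_shift (F : (Fin (n + 1) → M) →ₗ[R] M) : ⇑(shift F) = _root_.shift F := rfl

theorem shift_eq_zero_iff (F : (Fin (n + 1) → M) →ₗ[R] M) (v : Fin (n + 1) → M) :
    shift F v = 0 ↔ Fin.tail v = 0 ∧ F v = 0 := by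
  rw [coe_shift, _root_.shift, ← Fin.snoc_init_self (0 : Fin (n + 1) → M), Fin.snoc_inj]
  rfl

theorem ker_shift (F : (Fin (n + 1) → M) →ₗ[R] M) :
    ker (shift F) = (ker (F ∘ₗ single R (fun _ => M) 0)).map (single R (fun _ => M) 0) := by
  ext v
  simp only [mem_ker, shift_eq_zero_iff, Submodule.mem_map, comp_apply]
  constructor
  · rintro ⟨htail, hF⟩
    have hv : Pi.single 0 (v 0) = v := by
      funext i
      cases i using Fin.cases with
      | zero => simp
      | succ i => simpa [Fin.tail] using (congrFun htail i).symm
    exact ⟨v 0, by simpa [hv] using hF, by simpa using hv⟩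
  · rintro ⟨w, hw, rfl⟩
    refine ⟨funext fun i => ?_, by simpa using hw⟩
    simp [Fin.tail]

end Semiring

variable {R M : Type*} [DivisionRing R] [AddCommGroup M] [Module R M] [FiniteDimensional R M]
  {n : ℕ}

theorem finrank_range_shift (F : (Fin (n + 1) → M) →ₗ[R] M) :
    finrank R (range (shift F)) =
      finrank R M * n + finrank R (range (F ∘ₗ single R (fun _ => M) 0)) := by
  have hker : finrank R (ker (shift F)) = finrank R (ker (F ∘ₗ single R (fun _ => M) 0)) := by
    rw [ker_shift]
    exact (Submodule.equivMapOfInjective _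
      (Pi.single_injective (M := fun _ : Fin (n + 1) => M) 0) _).finrank_eq.symm
  have hshift := finrank_range_add_finrank_ker (shift F)
  have hpartial := finrank_range_add_finrank_ker (F ∘ₗ single R (fun _ => M) 0)
  rw [finrank_pi_fintype] at hshift
  simp only [Finset.sum_const, Finset.card_univ, Fintype.card_fin, smul_eq_mul] at hshift
  linarith

end LinearMap

theorem Continuous.shift {X : Type*} [TopologicalSpace X] {n : ℕ} {f : (Fin (n + 1) → X) → X}
    (hf : Continuous f) : Continuous (shift f) :=
  continuous_pi fun i => by
    cases i using Fin.lastCases with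
    | last => simpa using hf
    | cast i => simpa using continuous_apply i.succ

namespace ContinuousLinearMap

variable {R M : Type*} [Semiring R] [TopologicalSpace M] [AddCommMonoid M] [Module R M] {n : ℕ}

def shift (F : (Fin (n + 1) → M) →L[R] M) : (Fin (n + 1) → M) →L[R] Fin (n + 1) → M where
  toLinearMap := LinearMap.shift F
  cont := F.continuous.shift

@[simp]
theorem coe_shift (F : (Fin (n + 1) → M) →L[R] M) : ⇑F.shift = _root_.shift F := rfl

end ContinuousLinearMap

section Calculus

variable {𝕜 : Type*} [NontriviallyNormedField 𝕜]

theorem HasFDerivAt.shift {E : Type*} [NormedAddCommGroup E] [NormedSpace 𝕜 E] {n : ℕ}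
    {f : (Fin (n + 1) → E) → E} {F : (Fin (n + 1) → E) →L[𝕜] E} {x : Fin (n + 1) → E}
    (hf : HasFDerivAt f F x) : HasFDerivAt (shift f) F.shift x := by
  refine hasFDerivAt_pi'.2 fun i => ?_
  cases i using Fin.lastCases with
  | last =>
    simpa [show (ContinuousLinearMap.proj (Fin.last n)).comp F.shift = F from
      ContinuousLinearMap.ext fun v => by simp] using hf
  | cast i =>
    simpa [show (ContinuousLinearMap.proj i.castSucc).comp F.shift = .proj i.succ from
      ContinuousLinearMap.ext fun v => by simp] using hasFDerivAt_apply i.succ x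

theorem HasFDerivAt.comp_update {ι G : Type*} [Fintype ι] [DecidableEq ι] {E : ι → Type*}
    [∀ i, NormedAddCommGroup (E i)] [∀ i, NormedSpace 𝕜 (E i)] [NormedAddCommGroup G]
    [NormedSpace 𝕜 G] {f : (∀ i, E i) → G} {F : (∀ i, E i) →L[𝕜] G} {x : ∀ i, E i}
    (hf : HasFDerivAt f F x) (i : ι) :
    HasFDerivAt (fun z => f (update x i z)) (F ∘L ContinuousLinearMap.single 𝕜 E i) (x i) := by
  rw [← update_eq_self i x] at hf
  refine (hf.comp (x i) (hasFDerivAt_update x (x i))).congr_fderiv ?_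
  congr 1
  refine ContinuousLinearMap.ext fun y => funext fun j => ?_
  rcases eq_or_ne j i with rfl | hj <;> simp [*]

end Calculus

/-- For a continuously differentiable `f : (ℝᵈ)ⁿ → ℝᵈ` (here the context window has
length `n + 1`), the rank of the Fréchet derivative of the shift `(σf)` at `x` equals
`d·(n − 1)` (here `d·n`) plus the rank of the partial derivative `∂f/∂x₁(x)`, the
derivative at `x₁` of the map `z ↦ f(z, x₂, …, xₙ)` with the other coordinates fixed. -/
theorem rank_fderiv_shift {d n : ℕ}
    (f : (Fin (n + 1) → EuclideanSpace ℝ (Fin d)) → EuclideanSpace ℝ (Fin d))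
    (hf : ContDiff ℝ 1 f) (x : Fin (n + 1) → EuclideanSpace ℝ (Fin d)) :
    Module.finrank ℝ (LinearMap.range ((fderiv ℝ (shift f) x :
      (Fin (n + 1) → EuclideanSpace ℝ (Fin d)) →ₗ[ℝ] Fin (n + 1) → EuclideanSpace ℝ (Fin d)))) =
      d * n +
        Module.finrank ℝ
          (LinearMap.range ((fderiv ℝ (fun z => f (Function.update x 0 z)) (x 0) :
            EuclideanSpace ℝ (Fin d) →ₗ[ℝ] EuclideanSpace ℝ (Fin d)))) := by
  have hF := (hf.differentiable one_ne_zero x).hasFDerivAt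
  rw [hF.shift.fderiv, (hF.comp_update 0).fderiv]
  have hrank := LinearMap.finrank_range_shift (fderiv ℝ f x).toLinearMap
  rw [finrank_euclideanSpace_fin] at hrank
  exact hrank
end

section
/- Let n ≥ 2, let f : (ℝᵈ)ⁿ → ℝᵈ be continuously differentiable, fix x₁, …, xₙ ∈ ℝᵈ, set x = (x₁, …, xₙ), and let h(z) = 𝒜₂(f, id)(x₁, …, x_{n−1}, z). Then the Fréchet derivative Dh(xₙ) is injective if and only if the linear map v ↦ (∂f/∂xₙ(x) v, ∂f/∂x_{n−1}((σf)(x)) v) is injective, i.e., if and only if ker ∂f/∂xₙ(x) ∩ ker ∂f/∂x_{n−1}((σf)(x)) = {0}; moreover the ranks of these two linear maps are equal. -/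
/-- The `m`-th autoregression of `f` with measurements by `g`: its `k`-th component
(0-indexed) is `g ∘ f ∘ (σf)^{∘k}`. -/
def autoreg {X Y : Type*} {n : ℕ} (m : ℕ) (f : (Fin (n + 1) → X) → X) (g : X → Y)
    (x : Fin (n + 1) → X) : Fin m → Y :=
  fun k => g (f ((shift f)^[(k : ℕ)] x))

/-- `∂f/∂x_k(p)`: the Fréchet derivative at `p k` of the map obtained from `f` by
fixing all coordinates except the `k`-th. -/
noncomputable def partialDeriv {d N : ℕ}
    (f : (Fin N → EuclideanSpace ℝ (Fin d)) → EuclideanSpace ℝ (Fin d)) (k : Fin N)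
    (p : Fin N → EuclideanSpace ℝ (Fin d)) :
    EuclideanSpace ℝ (Fin d) →L[ℝ] EuclideanSpace ℝ (Fin d) :=
  fderiv ℝ (fun z => f (Function.update p k z)) (p k)

/-!
Moving the last coordinate of `x` by `v` moves `(σf)(x)` by `v` in its second-to-last coordinate
and by `P v` in its last one, so by the chain rule `Dh(xₙ) v = (P v, Q v + R (P v))`, where `R` is
the partial derivative of `f` in the last coordinate at `(σf)(x)`. This triangular map has the same
kernel `ker P ⊓ ker Q` as `v ↦ (P v, Q v)`, and linear maps with equal kernels have isomorphic
ranges.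
-/

namespace LinearMap

variable {K V W₁ W₂ : Type*} [Ring K] [AddCommGroup V] [Module K V] [AddCommGroup W₁]
  [Module K W₁] [AddCommGroup W₂] [Module K W₂]

theorem finrank_range_eq_of_ker_eq {T₁ : V →ₗ[K] W₁} {T₂ : V →ₗ[K] W₂} (h : ker T₁ = ker T₂) :
    Module.finrank K (range T₁) = Module.finrank K (range T₂) :=
  LinearEquiv.finrank_eq <|
    (T₁.quotKerEquivRange.symm.trans (Submodule.quotEquivOfEq _ _ h)).trans T₂.quotKerEquivRange

end LinearMap

theorem ContinuousLinearMap.ker_pi_fin_two_add_comp {R V W : Type*} [Semiring R]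
    [TopologicalSpace V] [AddCommMonoid V] [Module R V]
    [TopologicalSpace W] [AddCommMonoid W] [Module R W] [ContinuousAdd W]
    (P Q : V →L[R] W) (S : W →L[R] W) :
    LinearMap.ker (ContinuousLinearMap.pi ![P, Q + S.comp P] : V →ₗ[R] (Fin 2 → W)) =
      LinearMap.ker (P : V →ₗ[R] W) ⊓ LinearMap.ker (Q : V →ₗ[R] W) := by
  ext v
  simp only [LinearMap.mem_ker, Submodule.mem_inf, ContinuousLinearMap.coe_coe, funext_iff,
    Fin.forall_fin_two, ContinuousLinearMap.pi_apply, Matrix.cons_val_zero, Matrix.cons_val_one,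
    add_apply, ContinuousLinearMap.comp_apply, Pi.zero_apply]
  exact and_congr_right fun hP => by rw [hP, map_zero, add_zero]

section Tuple

variable {𝕜 E : Type*} [NontriviallyNormedField 𝕜] [NormedAddCommGroup E] [NormedSpace 𝕜 E]
  {n : ℕ}

theorem ContinuousLinearMap.pi_single_id {ι : Type*} [DecidableEq ι] (i : ι) :
    ContinuousLinearMap.pi (Pi.single i (.id 𝕜 E)) =
      ContinuousLinearMap.single 𝕜 (fun _ => E) i := by
  ext v j
  rcases eq_or_ne j i with rfl | h <;> simp [*]

theorem hasFDerivAt_snoc (xs : Fin n → E) (y : E) :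
    HasFDerivAt (fun z : E => (Fin.snoc xs z : Fin (n + 1) → E))
      (ContinuousLinearMap.single 𝕜 (fun _ => E) (Fin.last n)) y := by
  have h : (fun z : E => (Fin.snoc xs z : Fin (n + 1) → E)) =
      Function.update (Fin.snoc xs y : Fin (n + 1) → E) (Fin.last n) :=
    funext fun z => by rw [Fin.update_snoc_last]
  rw [h, ← ContinuousLinearMap.pi_single_id]
  exact hasFDerivAt_update _ _

noncomputable def shiftCLM (L : (Fin (n + 1) → E) →L[𝕜] E) :
    (Fin (n + 1) → E) →L[𝕜] (Fin (n + 1) → E) :=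
  .pi (Fin.lastCases L fun i => .proj i.succ)

@[simp]
theorem shiftCLM_apply (L : (Fin (n + 1) → E) →L[𝕜] E) (w : Fin (n + 1) → E) :
    shiftCLM L w = shift L w := by
  funext j
  induction j using Fin.lastCases <;> simp [shiftCLM, shift]

theorem hasFDerivAt_shift {f : (Fin (n + 1) → E) → E} {L : (Fin (n + 1) → E) →L[𝕜] E}
    {x : Fin (n + 1) → E} (hf : HasFDerivAt f L x) :
    HasFDerivAt (shift f) (shiftCLM L) x := by
  refine hasFDerivAt_pi'' fun j => ?_
  induction j using Fin.lastCases with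
  | last => simpa [shift, shiftCLM] using hf
  | cast i => simpa [shift, shiftCLM] using hasFDerivAt_apply i.succ x

end Tuple

theorem shift_single_last {X : Type*} [AddZeroClass X] {n : ℕ} (g : (Fin (n + 2) → X) → X)
    (v : X) :
    shift g (Pi.single (Fin.last (n + 1)) v) =
      Pi.single (Fin.last n).castSucc v +
        Pi.single (Fin.last (n + 1)) (g (Pi.single (Fin.last (n + 1)) v)) := by
  funext j
  induction j using Fin.lastCases with
  | last => simp [shift, (Fin.castSucc_lt_last _).ne]
  | cast i => induction i using Fin.lastCases <;> simp [shift, (Fin.castSucc_lt_last _).ne]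

section PartialDeriv

variable {d : ℕ}

local notation "ℝᵈ" => EuclideanSpace ℝ (Fin d)

theorem partialDeriv_eq_fderiv_comp_single {N : ℕ} {f : (Fin N → ℝᵈ) → ℝᵈ} {p : Fin N → ℝᵈ}
    (hf : DifferentiableAt ℝ f p) (k : Fin N) :
    partialDeriv f k p = (fderiv ℝ f p).comp (ContinuousLinearMap.single ℝ (fun _ => ℝᵈ) k) := by
  have hf' : HasFDerivAt f (fderiv ℝ f p) (Function.update p k (p k)) := by
    rw [Function.update_eq_self]; exact hf.hasFDerivAt
  have h := hf'.comp (p k) (hasFDerivAt_update (𝕜 := ℝ) p (p k))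
  rw [ContinuousLinearMap.pi_single_id] at h
  exact h.fderiv

theorem hasFDerivAt_autoreg_two_snoc {n : ℕ} {f : (Fin (n + 2) → ℝᵈ) → ℝᵈ}
    (hf : Differentiable ℝ f) (xs : Fin (n + 1) → ℝᵈ) (xn : ℝᵈ) :
    HasFDerivAt (fun z => autoreg 2 f id (Fin.snoc xs z))
      (.pi ![partialDeriv f (Fin.last (n + 1)) (Fin.snoc xs xn),
        partialDeriv f (Fin.last n).castSucc (shift f (Fin.snoc xs xn)) +
          (partialDeriv f (Fin.last (n + 1)) (shift f (Fin.snoc xs xn))).comp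
            (partialDeriv f (Fin.last (n + 1)) (Fin.snoc xs xn))]) xn := by
  have hc := hasFDerivAt_snoc (𝕜 := ℝ) xs xn
  have hP := partialDeriv_eq_fderiv_comp_single (hf (Fin.snoc xs xn)) (Fin.last (n + 1))
  have h₀ : HasFDerivAt (fun z => f (Fin.snoc xs z))
      (partialDeriv f (Fin.last (n + 1)) (Fin.snoc xs xn)) xn :=
    hP ▸ (hf _).hasFDerivAt.comp xn hc
  have h₁ : HasFDerivAt (fun z => f (shift f (Fin.snoc xs z)))
      (partialDeriv f (Fin.last n).castSucc (shift f (Fin.snoc xs xn)) +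
          (partialDeriv f (Fin.last (n + 1)) (shift f (Fin.snoc xs xn))).comp
            (partialDeriv f (Fin.last (n + 1)) (Fin.snoc xs xn))) xn := by
    refine ((hf _).hasFDerivAt.comp xn
      ((hasFDerivAt_shift (hf _).hasFDerivAt).comp xn hc)).congr_fderiv ?_
    ext v : 1
    simp [hP, shift_single_last, partialDeriv_eq_fderiv_comp_single (hf _)]
  refine hasFDerivAt_pi'' fun k => ?_
  fin_cases k
  · simpa [autoreg] using h₀
  · simpa [autoreg] using h₁

end PartialDeriv

/-- For `h(z) = 𝒜₂(f, id)(x₁, …, x_{n−1}, z)`, the derivative `Dh(xₙ)` is injective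
iff `v ↦ (P v, Q v)` is injective, iff `ker P ⊓ ker Q = ⊥`, where `P = ∂f/∂xₙ(x)` and
`Q = ∂f/∂x_{n−1}((σf)(x))`; moreover `Dh(xₙ)` and `v ↦ (P v, Q v)` have equal rank.
(Here the context window has length `n + 2`.) -/
theorem fderiv_autoreg_two_injective_iff {d n : ℕ}
    (f : (Fin (n + 2) → EuclideanSpace ℝ (Fin d)) → EuclideanSpace ℝ (Fin d))
    (hf : ContDiff ℝ 1 f)
    (xs : Fin (n + 1) → EuclideanSpace ℝ (Fin d)) (xn : EuclideanSpace ℝ (Fin d)) :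
    let x : Fin (n + 2) → EuclideanSpace ℝ (Fin d) := Fin.snoc xs xn
    let P := partialDeriv f (Fin.last (n + 1)) x
    let Q := partialDeriv f ((Fin.last n).castSucc) (shift f x)
    let Dh := fderiv ℝ (fun z => autoreg 2 f id (Fin.snoc xs z)) xn
    (Function.Injective Dh ↔
        Function.Injective (fun v : EuclideanSpace ℝ (Fin d) => (P v, Q v))) ∧
      (Function.Injective Dh ↔ LinearMap.ker (P : EuclideanSpace ℝ (Fin d) →ₗ[ℝ] EuclideanSpace ℝ (Fin d)) ⊓
        LinearMap.ker (Q : EuclideanSpace ℝ (Fin d) →ₗ[ℝ] EuclideanSpace ℝ (Fin d)) = ⊥) ∧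
      Module.finrank ℝ (LinearMap.range (Dh : EuclideanSpace ℝ (Fin d) →ₗ[ℝ]
          (Fin 2 → EuclideanSpace ℝ (Fin d)))) =
        Module.finrank ℝ (LinearMap.range (P.prod Q : EuclideanSpace ℝ (Fin d) →ₗ[ℝ]
          EuclideanSpace ℝ (Fin d) × EuclideanSpace ℝ (Fin d))) := by
  intro x P Q Dh
  have hDh : Dh = .pi ![P, Q + (partialDeriv f (Fin.last (n + 1)) (shift f x)).comp P] :=
    (hasFDerivAt_autoreg_two_snoc (hf.differentiable one_ne_zero) xs xn).fderiv
  have hker : LinearMap.ker Dh.toLinearMap =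
      LinearMap.ker P.toLinearMap ⊓ LinearMap.ker Q.toLinearMap := by
    rw [hDh]
    exact ContinuousLinearMap.ker_pi_fin_two_add_comp P Q _
  have hinj : Function.Injective Dh ↔
      LinearMap.ker P.toLinearMap ⊓ LinearMap.ker Q.toLinearMap = ⊥ := by
    rw [← hker, LinearMap.ker_eq_bot]
    rfl
  have hprod := ContinuousLinearMap.ker_prod P Q
  refine ⟨?_, hinj, LinearMap.finrank_range_eq_of_ker_eq (hker.trans hprod.symm)⟩
  rw [hinj, ← hprod, LinearMap.ker_eq_bot]
  rfl
end

section
/- Let 1 ≤ m ≤ n, let f : (ℝᵈ)ⁿ → ℝᵈ be smooth, fix x₁, …, xₙ ∈ ℝᵈ, set x = (x₁, …, xₙ), and let h : ℝᵈ → (ℝᵈ)ᵐ be the map h(z) = 𝒜ₘ(f, id)(x₁, …, x_{n−1}, z). Let L : ℝᵈ → (ℝᵈ)ᵐ be the linear map L v = ( ∂f/∂xₙ(x) v, ∂f/∂x_{n−1}((σf)(x)) v, …, ∂f/∂x_{n−m+1}((σf)^{∘(m−1)}(x)) v ). Then there exists a linear automorphism M of (ℝᵈ)ᵐ such that Dh(xₙ)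 = M ∘ L; in particular, rank Dh(xₙ) = rank L, and Dh(xₙ) is injective if and only if L is injective. -/

noncomputable def pD {d N : ℕ}
    (f : (Fin N → EuclideanSpace ℝ (Fin d)) → EuclideanSpace ℝ (Fin d)) (t : ℕ)
    (p : Fin N → EuclideanSpace ℝ (Fin d)) :
    EuclideanSpace ℝ (Fin d) →L[ℝ] EuclideanSpace ℝ (Fin d) :=
  if h : t < N then partialDeriv f ⟨t, h⟩ p else 0

theorem pD_eq {d N : ℕ}
    (f : (Fin N → EuclideanSpace ℝ (Fin d)) → EuclideanSpace ℝ (Fin d)) {t : ℕ}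
    (h : t < N) (p : Fin N → EuclideanSpace ℝ (Fin d)) :
    pD f t p = partialDeriv f ⟨t, h⟩ p := dif_pos h

theorem partialDeriv_apply_single {d N : ℕ}
    (f : (Fin N → EuclideanSpace ℝ (Fin d)) → EuclideanSpace ℝ (Fin d))
    {p : Fin N → EuclideanSpace ℝ (Fin d)} (hf : DifferentiableAt ℝ f p)
    (k : Fin N) (v : EuclideanSpace ℝ (Fin d)) :
    partialDeriv f k p v = fderiv ℝ f p (Pi.single k v) := by
  have h1 := hasFDerivAt_update (𝕜 := ℝ) (i := k) p (p k)
  have h2 : HasFDerivAt f (fderiv ℝ f p) (Function.update p k (p k)) := by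
    rw [Function.update_eq_self]; exact hf.hasFDerivAt
  have h3 := h2.comp (p k) h1
  have h4 : (fun z => f (Function.update p k z)) = f ∘ Function.update p k := rfl
  rw [partialDeriv, h4, h3.fderiv]
  simp only [ContinuousLinearMap.comp_apply]
  congr 1
  funext i
  rcases eq_or_ne i k with h | h
  · subst h; simp
  · simp [Pi.single_apply, h]

theorem fderiv_eq_sum_pD {d N : ℕ}
    (f : (Fin N → EuclideanSpace ℝ (Fin d)) → EuclideanSpace ℝ (Fin d))
    {p : Fin N → EuclideanSpace ℝ (Fin d)} (hf : DifferentiableAt ℝ f p)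
    (u : Fin N → EuclideanSpace ℝ (Fin d)) :
    fderiv ℝ f p u = ∑ i : Fin N, pD f (i : ℕ) p (u i) := by
  conv_lhs => rw [← Finset.univ_sum_single u, map_sum]
  refine Finset.sum_congr rfl fun i _ => ?_
  rw [pD_eq f i.isLt]
  exact (partialDeriv_apply_single f hf _ (u i)).symm

noncomputable def Hfun {d n : ℕ}
    (f : (Fin (n + 1) → EuclideanSpace ℝ (Fin d)) → EuclideanSpace ℝ (Fin d))
    (xs : Fin n → EuclideanSpace ℝ (Fin d)) (k : ℕ) (z : EuclideanSpace ℝ (Fin d)) :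
    EuclideanSpace ℝ (Fin d) :=
  f ((shift f)^[k] (Fin.snoc xs z))

noncomputable def psiAux {d n : ℕ}
    (f : (Fin (n + 1) → EuclideanSpace ℝ (Fin d)) → EuclideanSpace ℝ (Fin d))
    (xs : Fin n → EuclideanSpace ℝ (Fin d)) (t : ℕ) (z : EuclideanSpace ℝ (Fin d)) :
    EuclideanSpace ℝ (Fin d) :=
  if h : t < n then xs ⟨t, h⟩ else if t = n then z else Hfun f xs (t - n - 1) z

theorem iterate_shift_snoc {d n : ℕ}
    (f : (Fin (n + 1) → EuclideanSpace ℝ (Fin d)) → EuclideanSpace ℝ (Fin d))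
    (xs : Fin n → EuclideanSpace ℝ (Fin d)) :
    ∀ k, k ≤ n → ∀ (z : EuclideanSpace ℝ (Fin d)) (i : Fin (n + 1)),
      ((shift f)^[k] (Fin.snoc xs z)) i = psiAux f xs ((i : ℕ) + k) z := by
  intro k
  induction k with
  | zero =>
    intro _ z i
    induction i using Fin.lastCases with
    | last => simp [psiAux]
    | cast j => simp [psiAux, j.isLt]
  | succ k ih =>
    intro hk z i
    rw [Function.iterate_succ_apply']
    induction i using Fin.lastCases with
    | last =>
      rw [shift, Fin.snoc_last]
      have h1 : f ((shift f)^[k] (Fin.snoc xs z)) = Hfun f xs k z := rfl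
      rw [h1]
      simp only [Fin.val_last, psiAux]
      rw [dif_neg (by omega), if_neg (by omega)]
      have h3 : n + (k + 1) - n - 1 = k := by omega
      rw [h3]
    | cast j =>
      rw [shift, Fin.snoc_castSucc]
      rw [ih (by omega) z j.succ]
      have h2 : ((j.succ : Fin (n+1)) : ℕ) + k = ((j.castSucc : Fin (n+1)) : ℕ) + (k + 1) := by
        simp [Fin.val_succ]; omega
      rw [h2]

theorem contDiff_Hfun {d n : ℕ}
    {f : (Fin (n + 1) → EuclideanSpace ℝ (Fin d)) → EuclideanSpace ℝ (Fin d)}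
    (hf : ContDiff ℝ (⊤ : ℕ∞) f) (xs : Fin n → EuclideanSpace ℝ (Fin d)) :
    ∀ k, k ≤ n → ContDiff ℝ (⊤ : ℕ∞) (Hfun f xs k) := by
  intro k
  induction k using Nat.strong_induction_on with
  | _ k IH =>
  intro hk
  have hrep : Hfun f xs k = fun z => f (fun i : Fin (n + 1) => psiAux f xs ((i : ℕ) + k) z) := by
    funext z
    rw [Hfun, funext (iterate_shift_snoc f xs k hk z)]
  rw [hrep]
  apply hf.comp
  apply contDiff_pi.2
  intro i
  have hi := i.isLt
  unfold psiAux
  split_ifs with h1 h2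
  · exact contDiff_const
  · exact contDiff_id
  · exact IH _ (by omega) (by omega)

theorem fderiv_Hfun_rec {d n : ℕ}
    {f : (Fin (n + 1) → EuclideanSpace ℝ (Fin d)) → EuclideanSpace ℝ (Fin d)}
    (hf : ContDiff ℝ (⊤ : ℕ∞) f) (xs : Fin n → EuclideanSpace ℝ (Fin d))
    (xn : EuclideanSpace ℝ (Fin d)) :
    ∀ k, k ≤ n → ∀ v,
      fderiv ℝ (Hfun f xs k) xn v =
        pD f (n - k) ((shift f)^[k] (Fin.snoc xs xn)) v +
        ∑ j ∈ Finset.range k,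
          pD f (n - k + 1 + j) ((shift f)^[k] (Fin.snoc xs xn))
            (fderiv ℝ (Hfun f xs j) xn v) := by
  intro k hk v
  set P := (shift f)^[k] (Fin.snoc xs xn) with hP
  set D : ℕ → (EuclideanSpace ℝ (Fin d) →L[ℝ] EuclideanSpace ℝ (Fin d)) :=
    fun t => if t < n then 0 else if t = n then ContinuousLinearMap.id ℝ _ else
      fderiv ℝ (Hfun f xs (t - n - 1)) xn with hD
  have hcoord : ∀ i : Fin (n + 1),
      HasFDerivAt (fun z => psiAux f xs ((i : ℕ) + k) z) (D ((i : ℕ) + k)) xn := by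
    intro i
    have hi := i.isLt
    simp only [hD, psiAux]
    split_ifs with h1 h2
    · exact hasFDerivAt_const _ _
    · exact hasFDerivAt_id _
    · exact (((contDiff_Hfun hf xs _ (by omega)).differentiable (by simp)) _).hasFDerivAt
  have hΦ : HasFDerivAt (fun z (i : Fin (n + 1)) => psiAux f xs ((i : ℕ) + k) z)
      (ContinuousLinearMap.pi fun i : Fin (n + 1) => D ((i : ℕ) + k)) xn :=
    hasFDerivAt_pi.2 hcoord
  have hPhixn : (fun i : Fin (n + 1) => psiAux f xs ((i : ℕ) + k) xn) = P :=
    (funext (iterate_shift_snoc f xs k hk xn)).symm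
  have hfdiff : DifferentiableAt ℝ f P := (hf.differentiable (by simp)).differentiableAt
  have hfP : HasFDerivAt f (fderiv ℝ f P)
      (fun i : Fin (n + 1) => psiAux f xs ((i : ℕ) + k) xn) := by
    rw [hPhixn]; exact hfdiff.hasFDerivAt
  have hH : HasFDerivAt (Hfun f xs k)
      ((fderiv ℝ f P).comp (ContinuousLinearMap.pi fun i : Fin (n + 1) => D ((i : ℕ) + k)))
      xn := by
    have hrep : Hfun f xs k = f ∘ (fun z (i : Fin (n + 1)) => psiAux f xs ((i : ℕ) + k) z) := by
      funext z; exact congrArg f (funext (iterate_shift_snoc f xs k hk z))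
    rw [hrep]
    exact hfP.comp xn hΦ
  rw [hH.fderiv, ContinuousLinearMap.comp_apply, fderiv_eq_sum_pD f hfdiff]
  simp only [ContinuousLinearMap.pi_apply]
  have e1 : ∑ i : Fin (n + 1), pD f (i : ℕ) P (D ((i : ℕ) + k) v)
      = ∑ t ∈ Finset.range (n + 1), pD f t P (D (t + k) v) :=
    Fin.sum_univ_eq_sum_range (fun t => pD f t P (D (t + k) v)) (n + 1)
  rw [e1]
  have e2 : ∑ t ∈ Finset.Ico (n - k) (n + 1), pD f t P (D (t + k) v)
      = ∑ t ∈ Finset.range (n + 1), pD f t P (D (t + k) v) := by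
    apply Finset.sum_subset
    · intro t ht
      simp only [Finset.mem_Ico] at ht
      simp only [Finset.mem_range]
      omega
    · intro t ht hnt
      simp only [Finset.mem_range] at ht
      simp only [Finset.mem_Ico] at hnt
      have h0 : D (t + k) = 0 := by rw [hD]; exact if_pos (by omega)
      rw [h0]
      simp
  rw [← e2, Finset.sum_Ico_eq_sum_range]
  have hkk : n + 1 - (n - k) = k + 1 := by omega
  rw [hkk, Finset.sum_range_succ']
  have hF0 : pD f (n - k + 0) P (D ((n - k + 0) + k) v) = pD f (n - k) P v := by
    simp only [add_zero]
    have h2 : n - k + k = n := by omega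
    rw [h2]
    simp only [hD]
    simp
  rw [hF0, add_comm]
  congr 1
  apply Finset.sum_congr rfl
  intro j hj
  simp only [Finset.mem_range] at hj
  have h2 : n - k + (j + 1) + k = n + (j + 1) := by omega
  rw [h2]
  have h1 : n - k + (j + 1) = n - k + 1 + j := by omega
  rw [h1]
  have h3 : D (n + (j + 1)) = fderiv ℝ (Hfun f xs j) xn := by
    simp only [hD]
    rw [if_neg (by omega), if_neg (by omega)]
    have h4 : n + (j + 1) - n - 1 = j := by omega
    rw [h4]
  rw [h3]

/-- For `1 ≤ m ≤ n`, smooth `f`, and `h(z) = 𝒜ₘ(f, id)(x₁, …, x_{n−1}, z)`, there is a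
linear automorphism `M` of `(ℝᵈ)ᵐ` with `Dh(xₙ) = M ∘ L`, where
`L v = (∂f/∂xₙ(x) v, ∂f/∂x_{n−1}((σf)(x)) v, …, ∂f/∂x_{n−m+1}((σf)^{∘(m−1)}(x)) v)`;
in particular `rank Dh(xₙ) = rank L` and `Dh(xₙ)` is injective iff `L` is.
(Here the context window has length `n + 1`.) -/
theorem fderiv_autoreg_factorization {d n : ℕ} (m : ℕ) (hm1 : 1 ≤ m) (hmn : m ≤ n + 1)
    (f : (Fin (n + 1) → EuclideanSpace ℝ (Fin d)) → EuclideanSpace ℝ (Fin d))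
    (hf : ContDiff ℝ (⊤ : ℕ∞) f)
    (xs : Fin n → EuclideanSpace ℝ (Fin d)) (xn : EuclideanSpace ℝ (Fin d)) :
    let x : Fin (n + 1) → EuclideanSpace ℝ (Fin d) := Fin.snoc xs xn
    let L : EuclideanSpace ℝ (Fin d) →L[ℝ] (Fin m → EuclideanSpace ℝ (Fin d)) :=
      ContinuousLinearMap.pi fun k : Fin m =>
        partialDeriv f ⟨n - (k : ℕ), by omega⟩ ((shift f)^[(k : ℕ)] x)
    let Dh := fderiv ℝ (fun z => autoreg m f id (Fin.snoc xs z)) xn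
    ∃ M : (Fin m → EuclideanSpace ℝ (Fin d)) ≃L[ℝ] (Fin m → EuclideanSpace ℝ (Fin d)),
      Dh = (M : (Fin m → EuclideanSpace ℝ (Fin d)) →L[ℝ]
              (Fin m → EuclideanSpace ℝ (Fin d))).comp L ∧
      Module.finrank ℝ (LinearMap.range
        (Dh : EuclideanSpace ℝ (Fin d) →ₗ[ℝ] (Fin m → EuclideanSpace ℝ (Fin d)))) = Module.finrank ℝ (LinearMap.range
        (L : EuclideanSpace ℝ (Fin d) →ₗ[ℝ] (Fin m → EuclideanSpace ℝ (Fin d)))) ∧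
      (Function.Injective Dh ↔ Function.Injective L) := by
  intro x L Dh
  classical
  have hkn : ∀ k : Fin m, (k : ℕ) ≤ n := fun k => by have := k.isLt; omega
  have hDh : Dh = ContinuousLinearMap.pi fun k : Fin m => fderiv ℝ (Hfun f xs (k : ℕ)) xn := by
    show fderiv ℝ (fun z => autoreg m f id (Fin.snoc xs z)) xn = _
    have hrep : (fun z => autoreg m f id (Fin.snoc xs z))
        = fun z (k : Fin m) => Hfun f xs (k : ℕ) z := rfl
    rw [hrep]
    exact fderiv_pi fun k =>
      (((contDiff_Hfun hf xs _ (hkn k)).differentiable (by simp)) xn)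
  set A : Fin m → Fin m → (EuclideanSpace ℝ (Fin d) →L[ℝ] EuclideanSpace ℝ (Fin d)) :=
    fun k j => if (j : ℕ) < (k : ℕ) then
      pD f (n - (k : ℕ) + 1 + (j : ℕ)) ((shift f)^[(k : ℕ)] (Fin.snoc xs xn)) else 0 with hA
  have key : ∀ (k : Fin m) v,
      fderiv ℝ (Hfun f xs (k : ℕ)) xn v
        = pD f (n - (k : ℕ)) ((shift f)^[(k : ℕ)] (Fin.snoc xs xn)) v
          + ∑ j : Fin m, A k j (fderiv ℝ (Hfun f xs (j : ℕ)) xn v) := by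
    intro k v
    rw [fderiv_Hfun_rec hf xs xn (k : ℕ) (hkn k) v]
    congr 1
    set G : ℕ → EuclideanSpace ℝ (Fin d) := fun t => if t < (k : ℕ) then
            pD f (n - (k : ℕ) + 1 + t) ((shift f)^[(k : ℕ)] (Fin.snoc xs xn))
              (fderiv ℝ (Hfun f xs t) xn v) else 0 with hG
    have estep : ∀ j : Fin m, A k j (fderiv ℝ (Hfun f xs (j : ℕ)) xn v) = G (j : ℕ) := by
      intro j
      by_cases hj : (j : ℕ) < (k : ℕ)
      · simp only [hA, hG, if_pos hj]
      · simp only [hA, hG, if_neg hj, ContinuousLinearMap.zero_apply]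
    rw [Finset.sum_congr rfl fun j _ => estep j, Fin.sum_univ_eq_sum_range G m]
    rw [← Finset.sum_subset (Finset.range_subset_range.2 (le_of_lt k.isLt))
      (fun t ht hnt => by
        simp only [Finset.mem_range] at ht hnt
        simp only [hG]
        rw [if_neg (by omega)])]
    apply Finset.sum_congr rfl
    intro t ht
    simp only [Finset.mem_range] at ht
    simp only [hG]
    rw [if_pos ht]
  set N : (Fin m → EuclideanSpace ℝ (Fin d)) →L[ℝ] (Fin m → EuclideanSpace ℝ (Fin d)) :=
    ContinuousLinearMap.pi fun k : Fin m =>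
      ContinuousLinearMap.proj k - ∑ j : Fin m, (A k j).comp (ContinuousLinearMap.proj j)
    with hN
  have hNapp : ∀ (u : Fin m → EuclideanSpace ℝ (Fin d)) (k : Fin m),
      N u k = u k - ∑ j : Fin m, A k j (u j) := by
    intro u k
    simp [hN, ContinuousLinearMap.pi_apply, ContinuousLinearMap.sub_apply,
      ContinuousLinearMap.sum_apply, ContinuousLinearMap.comp_apply,
      ContinuousLinearMap.proj_apply]
  have hLapp : ∀ (v : EuclideanSpace ℝ (Fin d)) (k : Fin m),
      L v k = pD f (n - (k : ℕ)) ((shift f)^[(k : ℕ)] (Fin.snoc xs xn)) v := by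
    intro v k
    show partialDeriv f ⟨n - (k : ℕ), by omega⟩ ((shift f)^[(k : ℕ)] x) v = _
    rw [pD_eq f (show n - (k : ℕ) < n + 1 by omega)]
  have hNDh : ∀ v, N (Dh v) = L v := by
    intro v
    funext k
    have h2 : ∀ j : Fin m, Dh v j = fderiv ℝ (Hfun f xs (j : ℕ)) xn v := by
      intro j; rw [hDh]; rfl
    rw [hNapp, h2 k]
    have h3 : ∀ j : Fin m, A k j (Dh v j) = A k j (fderiv ℝ (Hfun f xs (j : ℕ)) xn v) := by
      intro j; rw [h2 j]
    rw [Finset.sum_congr rfl fun j _ => h3 j, key k v, hLapp v k]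
    exact add_sub_cancel_right _ _
  have hNzero : ∀ u, N u = 0 → u = 0 := by
    intro u hu
    have heq : ∀ k : Fin m, u k = ∑ j : Fin m, A k j (u j) := by
      intro k
      have h0 := congrFun hu k
      rw [hNapp] at h0
      have h1 : u k - ∑ j : Fin m, A k j (u j) = 0 := h0
      exact sub_eq_zero.mp h1
    have main : ∀ t : ℕ, ∀ k : Fin m, (k : ℕ) = t → u k = 0 := by
      intro t
      induction t using Nat.strong_induction_on with
      | _ t IH =>
      intro k hkt
      rw [heq k]
      apply Finset.sum_eq_zero
      intro j _
      by_cases hj : (j : ℕ) < (k : ℕ)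
      · rw [IH (j : ℕ) (by omega) j rfl, map_zero]
      · rw [hA]
        simp only [if_neg hj, ContinuousLinearMap.zero_apply]
    funext k
    exact main (k : ℕ) k rfl
  have hNinj : Function.Injective N := by
    intro a b hab
    have h0 : N (a - b) = 0 := by rw [map_sub, hab, sub_self]
    exact sub_eq_zero.mp (hNzero _ h0)
  have hNsurj : Function.Surjective N :=
    LinearMap.injective_iff_surjective.mp
      (show Function.Injective (N : (Fin m → EuclideanSpace ℝ (Fin d)) →ₗ[ℝ]
        (Fin m → EuclideanSpace ℝ (Fin d))) from hNinj)
  set e : (Fin m → EuclideanSpace ℝ (Fin d)) ≃ₗ[ℝ] (Fin m → EuclideanSpace ℝ (Fin d)) :=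
    LinearEquiv.ofBijective (N : (Fin m → EuclideanSpace ℝ (Fin d)) →ₗ[ℝ]
      (Fin m → EuclideanSpace ℝ (Fin d))) ⟨hNinj, hNsurj⟩ with he
  set M : (Fin m → EuclideanSpace ℝ (Fin d)) ≃L[ℝ] (Fin m → EuclideanSpace ℝ (Fin d)) :=
    e.toContinuousLinearEquiv.symm with hM
  have heq : Dh = (M : (Fin m → EuclideanSpace ℝ (Fin d)) →L[ℝ]
      (Fin m → EuclideanSpace ℝ (Fin d))).comp L := by
    apply ContinuousLinearMap.ext
    intro v
    rw [ContinuousLinearMap.comp_apply, ← hNDh v]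
    have h1 : N (Dh v) = e.toContinuousLinearEquiv (Dh v) := rfl
    rw [h1, hM]
    exact (e.toContinuousLinearEquiv.symm_apply_apply (Dh v)).symm
  refine ⟨M, heq, ?_, ?_⟩
  · have hrange : LinearMap.range (((M : (Fin m → EuclideanSpace ℝ (Fin d)) →L[ℝ]
        (Fin m → EuclideanSpace ℝ (Fin d))).comp L : EuclideanSpace ℝ (Fin d) →ₗ[ℝ] (Fin m → EuclideanSpace ℝ (Fin d))))
        = Submodule.map (M.toLinearEquiv : (Fin m → EuclideanSpace ℝ (Fin d)) →ₗ[ℝ]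
            (Fin m → EuclideanSpace ℝ (Fin d))) (LinearMap.range (L : EuclideanSpace ℝ (Fin d) →ₗ[ℝ] (Fin m → EuclideanSpace ℝ (Fin d)))) := by
      ext w
      simp only [LinearMap.mem_range, Submodule.mem_map, ContinuousLinearMap.comp_apply]
      constructor
      · rintro ⟨v, rfl⟩
        exact ⟨L v, ⟨v, rfl⟩, rfl⟩
      · rintro ⟨u, ⟨v, rfl⟩, rfl⟩
        exact ⟨v, rfl⟩
    rw [heq, hrange]
    exact LinearEquiv.finrank_map_eq M.toLinearEquiv _
  · rw [heq, ContinuousLinearMap.coe_comp']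
    constructor
    · intro h
      exact h.of_comp
    · intro h
      exact (M.injective).comp h
end
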